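/- For every b with √2(4-π)/(π-2√2) < b < 4, there exists x in (0,1) such that f_b(x) > arcsin(x), where f_b(x) = (b+2)(sqrt(1+x) - sqrt(1-x))/(b + sqrt(1+x) + sqrt(1-x)). -/

import Mathlib

noncomputable def f (β x : ℝ) : ℝ :=
  (β + 2) * (Real.sqrt (1 + x) - Real.sqrt (1 - x)) /
    (β + Real.sqrt (1 + x) + Real.sqrt (1 - x))

/-!
Substituting `x = sin 2t` with `0 < t < π/4` gives `√(1 ± x) = cos t ± sin t` and `arcsin x = 2t`,
so `f_b x > arcsin x` becomes `t (b + 2 cos t) < (b + 2) sin t`. The difference of the two sides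
is `t³ (4 - b) / 6 + O(t⁵)`, positive for small `t > 0` as soon as `b < 4`.
-/

open Real Filter Topology

lemma Real.sqrt_one_add_sin_two_mul (t : ℝ) : √(1 + sin (2 * t)) = |cos t + sin t| := by
  rw [← sqrt_sq_eq_abs, sin_two_mul]
  congr 1
  linear_combination -sin_sq_add_cos_sq t

lemma Real.sqrt_one_sub_sin_two_mul (t : ℝ) : √(1 - sin (2 * t)) = |cos t - sin t| := by
  rw [← sqrt_sq_eq_abs, sin_two_mul]
  congr 1
  linear_combination -sin_sq_add_cos_sq t

lemma f_sin_two_mul {β t : ℝ} (h : |sin t| ≤ cos t) :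
    f β (sin (2 * t)) = (β + 2) * (2 * sin t) / (β + 2 * cos t) := by
  obtain ⟨h₁, h₂⟩ := abs_le.mp h
  rw [f, sqrt_one_add_sin_two_mul, sqrt_one_sub_sin_two_mul, abs_of_nonneg (by linarith),
    abs_of_nonneg (by linarith)]
  ring_nf

lemma mul_add_two_cos_lt_add_two_mul_sin {β t : ℝ} (hβ : -2 ≤ β) (ht₀ : 0 < t) (ht₁ : t ≤ 1)
    (htβ : t ^ 2 ≤ 4 - β) : t * (β + 2 * cos t) < (β + 2) * sin t := by
  have hsin : t - t ^ 3 / 6 ≤ sin t := sin_ge_sub_cube ht₀.le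
  have hcos : cos t ≤ 1 - t ^ 2 / 2 + t ^ 4 * (5 / 96) := by
    have := (abs_le.mp (cos_bound (abs_le.mpr ⟨by linarith, ht₁⟩))).2
    rw [abs_of_pos ht₀] at this
    linarith
  calc t * (β + 2 * cos t) ≤ t * (β + 2 * (1 - t ^ 2 / 2 + t ^ 4 * (5 / 96))) := by gcongr
    _ < (β + 2) * (t - t ^ 3 / 6) := by nlinarith [pow_pos ht₀ 3, pow_pos ht₀ 5]
    _ ≤ (β + 2) * sin t := by gcongr; linarith

lemma exists_arcsin_lt_f {β : ℝ} (hβ₂ : -2 < β) (hβ₄ : β < 4) :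
    ∃ x ∈ Set.Ioo (0 : ℝ) 1, arcsin x < f β x := by
  have hsmall : ∀ᶠ t in 𝓝[>] (0 : ℝ), 0 < t ∧ t < 1 ∧ t < π / 4 ∧ t < 4 - β ∧ t < β + 2 :=
    eventually_mem_nhdsWithin.and <| nhdsWithin_le_nhds <|
      (eventually_lt_nhds one_pos).and <| (eventually_lt_nhds (by positivity)).and <|
        (eventually_lt_nhds (by linarith)).and (eventually_lt_nhds (by linarith))
  obtain ⟨t, ht₀, ht₁, htπ, ht₄, ht₂⟩ := hsmall.exists
  have hπ : 0 < π := pi_pos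
  have hsin_pos : 0 < sin t := sin_pos_of_pos_of_lt_pi ht₀ (by linarith)
  have hsin_lt_cos : sin t < cos t := by
    rw [← sin_pi_div_two_sub]
    exact sin_lt_sin_of_lt_of_le_pi_div_two (by linarith) (by linarith) (by linarith)
  have hcos_ge : 1 - t / 2 ≤ cos t := by nlinarith [one_sub_sq_div_two_le_cos (x := t)]
  refine ⟨sin (2 * t), ⟨sin_pos_of_pos_of_lt_pi (by linarith) (by linarith), ?_⟩, ?_⟩
  · rw [← sin_pi_div_two]
    exact sin_lt_sin_of_lt_of_le_pi_div_two (by linarith) le_rfl (by linarith)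
  rw [arcsin_sin (by linarith) (by linarith),
    f_sin_two_mul (abs_le.mpr ⟨by linarith, hsin_lt_cos.le⟩), lt_div_iff₀ (by linarith)]
  linarith [mul_add_two_cos_lt_add_two_mul_sin hβ₂.le ht₀ ht₁.le (by nlinarith)]

lemma sqrt_two_mul_four_sub_pi_div_pos : 0 < √2 * (4 - π) / (π - 2 * √2) := by
  have hsqrt : √2 < 3 / 2 := by
    rw [sqrt_lt' (by norm_num)]; norm_num
  have := pi_gt_three
  have := pi_lt_four
  exact div_pos (by positivity) (by linarith)

theorem stmt_15 (b : ℝ)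
    (hb₁ : Real.sqrt 2 * (4 - Real.pi) / (Real.pi - 2 * Real.sqrt 2) < b) (hb₂ : b < 4) :
    ∃ x ∈ Set.Ioo (0:ℝ) 1, f b x > Real.arcsin x :=
  exists_arcsin_lt_f (by linarith [sqrt_two_mul_four_sub_pi_div_pos]) hb₂
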